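/- Let r ≥ 1 and let ω_1, …, ω_r be complex numbers with Re(ω_j) > 0 for all j. Then for every complex number s with Re(s) > 1, Z(s,ω) · ∏_{S ⊆ {1,…,r}, S ≠ ∅} Z(s + ∑_{j∈S} ω_j, ω)^{(-1)^{|S|}} = ζ(s), where the finite product runs over all nonempty subsets S of {1,…,r}. -/

import Mathlib

/-!
`Z(s + ∑_{j∈S} ω_j, ω)` is the product of `ζ(s + m·ω)` over the `m ∈ ℕ^r` with `m_j ≥ 1` for
`j ∈ S`. By inclusion–exclusion over the support of `m`, a factor `ζ(s + m·ω)` with `m ≠ 0`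
occurs in the alternating product with total exponent `∑_{S ⊆ supp m} (-1)^|S| = 0`, so only
`ζ(s)` survives. Taking logarithms makes this an identity between absolutely convergent sums:
`‖ζ(z) - 1‖` decays like `2^{-Re z}`, hence geometrically in each `m_j`.
-/

open Complex Filter Topology

theorem indicator_one_le_iff_subset_support {ι : Type*} (s : Set ι) (n : ι → ℕ) :
    s.indicator 1 ≤ n ↔ s ⊆ Function.support n := by
  refine forall_congr' fun j => ?_
  by_cases hj : j ∈ s <;> simp [hj, Nat.one_le_iff_ne_zero]

theorem sum_neg_one_pow_card_smul_indicator_Ici {ι G : Type*} [Fintype ι] [AddCommGroup G]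
    (f : (ι → ℕ) → G) (n : ι → ℕ) :
    ∑ S : Finset ι, (-1 : ℤ) ^ S.card • (Set.Ici ((S : Set ι).indicator 1)).indicator f n =
      if n = 0 then f 0 else 0 := by
  classical
  set N := Finset.univ.filter fun j => n j ≠ 0
  have hN : N = ∅ ↔ n = 0 := by simp [N, Finset.filter_eq_empty_iff, funext_iff]
  calc ∑ S : Finset ι, (-1 : ℤ) ^ S.card • (Set.Ici ((S : Set ι).indicator 1)).indicator f n
      = ∑ S, if S ∈ N.powerset then (-1 : ℤ) ^ S.card • f n else 0 := by
        refine Fintype.sum_congr _ _ fun S => ?_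
        have hS : S ∈ N.powerset ↔ (S : Set ι) ⊆ Function.support n := by
          simp [N, Set.subset_def, Finset.subset_iff]
        simp only [Set.indicator_apply, Set.mem_Ici, indicator_one_le_iff_subset_support, hS]
        split_ifs <;> simp
    _ = (∑ S ∈ N.powerset, (-1 : ℤ) ^ S.card) • f n := by
        rw [Fintype.sum_ite_mem, Finset.sum_smul]
    _ = if n = 0 then f 0 else 0 := by
        rw [Finset.sum_powerset_neg_one_pow_card]
        by_cases h : n = 0 <;> simp [h, hN]

theorem tsum_add_right_eq_tsum_indicator_Ici {ι G : Type*} [AddCommMonoid G] [TopologicalSpace G]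
    (f : (ι → ℕ) → G) (c : ι → ℕ) :
    ∑' m, f (m + c) = ∑' n, (Set.Ici c).indicator f n := by
  calc ∑' m, f (m + c) = ∑' m, (Set.Ici c).indicator f (m + c) :=
        tsum_congr fun m => (Set.indicator_of_mem le_add_self f).symm
    _ = ∑' n, (Set.Ici c).indicator f n :=
        (add_left_injective c).tsum_eq fun n hn =>
          ⟨n - c, tsub_add_cancel_of_le (by_contra fun h => hn (Set.indicator_of_notMem h f))⟩

theorem sum_neg_one_pow_card_smul_tsum_add_indicator {ι G : Type*} [Fintype ι] [AddCommGroup G]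
    [UniformSpace G] [IsUniformAddGroup G] [CompleteSpace G] [T2Space G]
    {f : (ι → ℕ) → G} (hf : Summable f) :
    ∑ S : Finset ι, (-1 : ℤ) ^ S.card • ∑' m, f (m + (S : Set ι).indicator 1) = f 0 := by
  classical
  calc ∑ S : Finset ι, (-1 : ℤ) ^ S.card • ∑' m, f (m + (S : Set ι).indicator 1)
      = ∑' n, ∑ S : Finset ι,
          (-1 : ℤ) ^ S.card • (Set.Ici ((S : Set ι).indicator 1)).indicator f n := by
        rw [Summable.tsum_finsetSum fun S _ => (hf.indicator _).const_smul _]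
        simp only [tsum_add_right_eq_tsum_indicator_Ici, (hf.indicator _).tsum_const_smul]
    _ = f 0 := by
        simp only [sum_neg_one_pow_card_smul_indicator_Ici]
        exact tsum_ite_eq 0 _

theorem prod_tprod_add_indicator_zpow_neg_one_pow_card {ι : Type*} [Fintype ι]
    {F : (ι → ℕ) → ℂ} (hF : ∀ m, F m ≠ 0) (hlog : Summable fun m => log (F m)) :
    ∏ S : Finset ι, (∏' m, F (m + (S : Set ι).indicator 1)) ^ ((-1 : ℤ) ^ S.card) = F 0 := by
  have hshift : ∀ S : Finset ι, ∏' m, F (m + (S : Set ι).indicator 1) =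
      exp (∑' m, log (F (m + (S : Set ι).indicator 1))) := fun S =>
    (cexp_tsum_eq_tprod (fun m => hF _) (hlog.comp_injective (add_left_injective _))).symm
  simp only [hshift, ← exp_int_mul, ← exp_sum, ← zsmul_eq_mul]
  rw [sum_neg_one_pow_card_smul_tsum_add_indicator hlog, exp_log (hF 0)]

theorem summable_fintype_prod_of_nonneg {ι : Type*} [Fintype ι] {β : ι → Type*}
    {f : ∀ i, β i → ℝ} (hf₀ : ∀ i b, 0 ≤ f i b) (hf : ∀ i, Summable (f i)) :
    Summable fun x : ∀ i, β i => ∏ i, f i (x i) := by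
  classical
  refine summable_of_sum_le (fun x => Finset.prod_nonneg fun i _ => hf₀ i (x i))
    (c := ∏ i, ∑' b, f i b) fun u => ?_
  calc ∑ x ∈ u, ∏ i, f i (x i)
      ≤ ∑ x ∈ Fintype.piFinset fun i => u.image (· i), ∏ i, f i (x i) :=
        Finset.sum_le_sum_of_subset_of_nonneg
          (fun x hx => Fintype.mem_piFinset.mpr fun i => Finset.mem_image_of_mem _ hx)
          fun x _ _ => Finset.prod_nonneg fun i _ => hf₀ i (x i)
    _ = ∏ i, ∑ b ∈ u.image (· i), f i b := (Finset.prod_univ_sum _ _).symm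
    _ ≤ ∏ i, ∑' b, f i b :=
        Finset.prod_le_prod (fun i _ => Finset.sum_nonneg fun b _ => hf₀ i b)
          fun i _ => (hf i).sum_le_tsum _ fun b _ => hf₀ i b

theorem riemannZeta_sub_one_eq_tsum {z : ℂ} (hz : 1 < z.re) :
    riemannZeta z - 1 = ∑' n : ℕ, 1 / ((n + 2 : ℕ) : ℂ) ^ z := by
  have hz0 : z ≠ 0 := by rintro rfl; norm_num at hz
  rw [zeta_eq_tsum_one_div_nat_cpow hz,
    ← (Complex.summable_one_div_nat_cpow.mpr hz).sum_add_tsum_nat_add 2]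
  simp [Finset.sum_range_succ, zero_cpow hz0]

theorem rpow_neg_le_rpow_neg_mul_two_rpow {b σ x : ℝ} (hb : 2 ≤ b) (hσx : σ ≤ x) :
    b ^ (-x) ≤ b ^ (-σ) * 2 ^ (σ - x) := by
  calc b ^ (-x) = b ^ (-σ) * b ^ (σ - x) := by
        rw [← Real.rpow_add (by linarith : (0 : ℝ) < b)]; ring_nf
    _ ≤ b ^ (-σ) * 2 ^ (σ - x) :=
        mul_le_mul_of_nonneg_left (Real.rpow_le_rpow_of_nonpos two_pos hb (by linarith))
          (by positivity)

theorem norm_riemannZeta_sub_one_le {σ : ℝ} (hσ : 1 < σ) {z : ℂ} (hz : σ ≤ z.re) :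
    ‖riemannZeta z - 1‖ ≤ (∑' n : ℕ, ((n + 2 : ℕ) : ℝ) ^ (-σ)) * 2 ^ (σ - z.re) := by
  have hsum : Summable fun n : ℕ => ((n + 2 : ℕ) : ℝ) ^ (-σ) :=
    (summable_nat_add_iff 2).mpr (Real.summable_nat_rpow.mpr (by linarith))
  rw [riemannZeta_sub_one_eq_tsum (by linarith)]
  refine tsum_of_norm_bounded (hsum.hasSum.mul_right _) fun n => ?_
  rw [norm_div, norm_one, norm_natCast_cpow_of_pos (by omega), one_div,
    ← Real.rpow_neg (by positivity)]
  exact rpow_neg_le_rpow_neg_mul_two_rpow (by push_cast; linarith) hz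

section LinearForm

variable {ι : Type*} [Fintype ι]

theorem re_add_sum_natCast_mul (s : ℂ) (ω : ι → ℂ) (m : ι → ℕ) :
    (s + ∑ j, (m j : ℂ) * ω j).re = s.re + ∑ j, m j * (ω j).re := by
  simp

theorem re_le_re_add_sum_natCast_mul {ω : ι → ℂ} (s : ℂ) (hω : ∀ j, 0 ≤ (ω j).re) (m : ι → ℕ) :
    s.re ≤ (s + ∑ j, (m j : ℂ) * ω j).re := by
  rw [re_add_sum_natCast_mul]
  exact le_add_of_nonneg_right
    (Finset.sum_nonneg fun j _ => mul_nonneg (Nat.cast_nonneg _) (hω j))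

theorem sum_natCast_add_indicator_one_mul (ω : ι → ℂ) (m : ι → ℕ) (S : Finset ι) :
    ∑ j, (((m + (S : Set ι).indicator 1 : ι → ℕ) j : ℕ) : ℂ) * ω j =
      ∑ j ∈ S, ω j + ∑ j, (m j : ℂ) * ω j := by
  classical
  simp only [Pi.add_apply, Nat.cast_add, add_mul, Finset.sum_add_distrib]
  rw [add_comm]
  congr 1
  simp [Set.indicator_apply]

theorem summable_riemannZeta_add_sum_natCast_mul_sub_one {s : ℂ} (hs : 1 < s.re) {ω : ι → ℂ}
    (hω : ∀ j, 0 < (ω j).re) :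
    Summable fun m : ι → ℕ => riemannZeta (s + ∑ j, (m j : ℂ) * ω j) - 1 := by
  have hgeom : Summable fun m : ι → ℕ => ∏ j, ((2 : ℝ) ^ (-(ω j).re)) ^ m j :=
    summable_fintype_prod_of_nonneg (fun j k => by positivity) fun j =>
      summable_geometric_of_lt_one (by positivity)
        (Real.rpow_lt_one_of_one_lt_of_neg (by norm_num) (by linarith [hω j]))
  refine Summable.of_norm_bounded
    (hgeom.mul_left (∑' n : ℕ, ((n + 2 : ℕ) : ℝ) ^ (-s.re))) fun m => ?_
  convert norm_riemannZeta_sub_one_le hs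
    (re_le_re_add_sum_natCast_mul s (fun j => (hω j).le) m) using 2
  rw [re_add_sum_natCast_mul, sub_add_cancel_left, ← Finset.sum_neg_distrib,
    Real.rpow_sum_of_pos two_pos]
  refine Finset.prod_congr rfl fun j _ => ?_
  rw [← Real.rpow_natCast, ← Real.rpow_mul two_pos.le]
  ring_nf

theorem summable_log_riemannZeta_add_sum_natCast_mul {s : ℂ} (hs : 1 < s.re) {ω : ι → ℂ}
    (hω : ∀ j, 0 < (ω j).re) :
    Summable fun m : ι → ℕ => log (riemannZeta (s + ∑ j, (m j : ℂ) * ω j)) := by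
  simpa using Complex.summable_log_one_add_of_summable
    (summable_riemannZeta_add_sum_natCast_mul_sub_one hs hω)

end LinearForm

theorem higherRiemannZeta_alternating_product_general (r : ℕ) (ω : Fin r → ℂ)
    (hω : ∀ j, 0 < (ω j).re) (s : ℂ) (hs : 1 < s.re) :
    (∏' m : Fin r → ℕ, riemannZeta (s + ∑ j, (m j : ℂ) * ω j)) *
      ∏ S ∈ (Finset.univ : Finset (Fin r)).powerset.erase ∅,
        (∏' m : Fin r → ℕ,
          riemannZeta (s + ∑ j ∈ S, ω j + ∑ j, (m j : ℂ) * ω j)) ^ ((-1 : ℤ) ^ S.card) =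
      riemannZeta s := by
  set F : (Fin r → ℕ) → ℂ := fun m => riemannZeta (s + ∑ j, (m j : ℂ) * ω j)
  have hF : ∀ m, F m ≠ 0 := fun m => riemannZeta_ne_zero_of_one_lt_re <|
    hs.trans_le (re_le_re_add_sum_natCast_mul s (fun j => (hω j).le) m)
  calc _ = ∏ S : Finset (Fin r),
        (∏' m, F (m + (S : Set (Fin r)).indicator 1)) ^ ((-1 : ℤ) ^ S.card) := by
        rw [← Finset.powerset_univ, ← Finset.mul_prod_erase _ _ (Finset.empty_mem_powerset _)]
        simp only [F, sum_natCast_add_indicator_one_mul, add_assoc, Finset.card_empty, pow_zero,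
          zpow_one, Finset.sum_empty, zero_add]
    _ = F 0 := prod_tprod_add_indicator_zpow_neg_one_pow_card hF
        (summable_log_riemannZeta_add_sum_natCast_mul hs hω)
    _ = riemannZeta s := by simp [F]

/-- The alternating-product functional relation:
`Z(s,ω) · ∏_{∅ ≠ S ⊆ {1,…,r}} Z(s + ∑_{j∈S} ω_j, ω)^{(-1)^{|S|}} = ζ(s)` for `Re s > 1`. -/
theorem higherRiemannZeta_alternating_product (r : ℕ) (hr : 1 ≤ r) (ω : Fin r → ℂ)
    (hω : ∀ j, 0 < (ω j).re) (s : ℂ) (hs : 1 < s.re) :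
    (∏' m : Fin r → ℕ, riemannZeta (s + ∑ j, (m j : ℂ) * ω j)) *
      ∏ S ∈ (Finset.univ : Finset (Fin r)).powerset.erase ∅,
        (∏' m : Fin r → ℕ,
          riemannZeta (s + ∑ j ∈ S, ω j + ∑ j, (m j : ℂ) * ω j)) ^ ((-1 : ℤ) ^ S.card) =
      riemannZeta s :=
  higherRiemannZeta_alternating_product_general r ω hω s hs
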